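/- arXiv:2410.15213 — 4 statements merged into one kernel-verified Lean document; each statement's English description precedes it below -/
import Mathlib

section
/- If u and v are vertices of a graph G with N(u) \ {v} ⊆ N(v), then the biclique vertex partition number of G is at most that of G − v, i.e., bp(G) ≤ bp(G − v). -/
open SimpleGraph CategoryTheory

namespace Paper

variable {V : Type} {W : Type}

/-- The 1-subdivision of a graph `G`: each edge is replaced by a path of
length two, by inserting a new vertex (the edge itself) on every edge. -/
def subdiv (G : SimpleGraph V) : SimpleGraph (V ⊕ G.edgeSet) where
  Adj x y :=
    match x, y with
    | Sum.inl v, Sum.inr e => v ∈ (e : Sym2 V)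
    | Sum.inr e, Sum.inl v => v ∈ (e : Sym2 V)
    | _, _ => False
  symm := by
    constructor
    rintro (v | e) (w | f) h
    · exact h.elim
    · exact h
    · exact h
    · exact h.elim
  loopless := by constructor; rintro (v | e) h <;> exact h.elim

/-- The geometric realization of the independence complex of a graph:
convex combinations of vertices whose support is an independent set. -/
def indRealization (G : SimpleGraph V) : Type :=
  {f : V → ℝ // (∀ v, 0 ≤ f v) ∧ (∑ᶠ v, f v) = 1 ∧
     ∀ u v, f u ≠ 0 → f v ≠ 0 → ¬ G.Adj u v}

instance (G : SimpleGraph V) : TopologicalSpace (indRealization G) := by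
  delta indRealization; infer_instance

/-- The singular chain complex of a space, with rational coefficients. -/
noncomputable def singularChains (X : Type) [TopologicalSpace X] :
    ChainComplex (ModuleCat ℚ) ℕ :=
  (AlgebraicTopology.alternatingFaceMapComplex (ModuleCat ℚ)).obj
    (((SimplicialObject.whiskering _ _).obj (ModuleCat.free ℚ)).obj
      (TopCat.toSSet.obj (TopCat.of X)))

/-- Nontriviality of the `n`-th singular homology with rational coefficients. -/
def homologyNontrivial (X : Type) [TopologicalSpace X] (n : ℕ) : Prop :=
  Nontrivial ((singularChains X).homology n)

/-- Nontriviality of the reduced singular homology (rational coefficients)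
in degree `n : ℤ`. -/
def reducedHomologyNontrivial (X : Type) [TopologicalSpace X] : ℤ → Prop
  | Int.negSucc 0 => IsEmpty X
  | Int.negSucc (_ + 1) => False
  | Int.ofNat 0 => ∃ x y : X, ¬ Joined x y
  | Int.ofNat (n + 1) => homologyNontrivial X (n + 1)

/-- The Castelnuovo–Mumford regularity of a graph: the largest `j` such that
some induced subcomplex of the independence complex has nontrivial reduced
homology in dimension `j - 1`. -/
noncomputable def greg {V : Type} (G : SimpleGraph V) : ℕ :=
  sSup { j : ℕ |
    ∃ S : Set V, reducedHomologyNontrivial (indRealization (G.induce S)) ((j : ℤ) - 1) }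

/-- `X, Y : Fin k → Finset V` describe a partition of the vertex set of `G`
into `k` (not necessarily induced) bicliques with sides `X i` and `Y i`. -/
def IsBicliquePartition (G : SimpleGraph V) (k : ℕ) (X Y : Fin k → Finset V) : Prop :=
  (∀ i, (X i).Nonempty) ∧ (∀ i, Disjoint (X i) (Y i)) ∧
  (∀ i, ∀ x ∈ X i, ∀ y ∈ Y i, G.Adj x y) ∧
  (∀ v : V, ∃! i : Fin k, v ∈ X i ∨ v ∈ Y i)

/-- The biclique vertex partition number `bp G`. -/
noncomputable def bp (G : SimpleGraph V) : ℕ :=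
  sInf { k | ∃ X Y : Fin k → Finset V, IsBicliquePartition G k X Y }

/-- `γ(A, G)`: the least size of a vertex set dominating `A`. -/
noncomputable def domNum (G : SimpleGraph V) (A : Set V) : ℕ :=
  sInf { n | ∃ D : Finset V, D.card = n ∧ ∀ a ∈ A, ∃ d ∈ D, d = a ∨ G.Adj d a }

/-- The domination number `γ(G)`. -/
noncomputable def gamma (G : SimpleGraph V) : ℕ := domNum G Set.univ

/-- The independence domination number `γ^i(G)`: the maximum of `γ(I, G)` over
independent sets `I` consisting of non-isolated vertices. -/
noncomputable def iDom (G : SimpleGraph V) : ℕ :=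
  sSup { n | ∃ I : Set V, (∀ v ∈ I, ∃ w, G.Adj v w) ∧
      (∀ u ∈ I, ∀ v ∈ I, ¬ G.Adj u v) ∧ n = domNum G I }

/-- `M` is an induced matching of `G`. -/
def IsInducedMatching (G : SimpleGraph V) (M : Finset (Sym2 V)) : Prop :=
  ((M : Set (Sym2 V)) ⊆ G.edgeSet) ∧
  ∀ e ∈ M, ∀ f ∈ M, e ≠ f → ∀ u ∈ e, ∀ v ∈ f, u ≠ v ∧ ¬ G.Adj u v

/-- The induced matching number of `G`. -/
noncomputable def imNum (G : SimpleGraph V) : ℕ :=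
  sSup { n | ∃ M : Finset (Sym2 V), IsInducedMatching G M ∧ M.card = n }

/-- A simple vertex: the neighborhoods of its neighbors are linearly
ordered by inclusion. -/
def IsSimpleVertex (G : SimpleGraph V) (x : V) : Prop :=
  ∀ u v : V, G.Adj x u → G.Adj x v →
    G.neighborSet u ⊆ G.neighborSet v ∨ G.neighborSet v ⊆ G.neighborSet u

/-- A bisimplicial edge `uv`: every vertex of `N(u) \ {v}` is adjacent to
every vertex of `N(v) \ {u}`, i.e. `N[e]` induces a complete bipartite graph. -/
def IsBisimplicialEdge (G : SimpleGraph V) (u v : V) : Prop :=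
  G.Adj u v ∧ ∀ a b : V, G.Adj u a → a ≠ v → G.Adj v b → b ≠ u → G.Adj a b

/-- A chordal bipartite graph: bipartite with no induced cycle of length
greater than four. -/
def ChordalBipartite (G : SimpleGraph V) : Prop :=
  G.Colorable 2 ∧ ∀ n : ℕ, 4 < n → IsEmpty (cycleGraph n ↪g G)

/-- Attach a pendant vertex (whisker) `w : W` at the vertex `φ w` for each `w`. -/
def addPendants (G : SimpleGraph V) (φ : W → V) : SimpleGraph (V ⊕ W) where
  Adj x y :=
    match x, y with
    | Sum.inl a, Sum.inl b => G.Adj a b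
    | Sum.inl a, Sum.inr w => a = φ w
    | Sum.inr w, Sum.inl a => a = φ w
    | Sum.inr _, Sum.inr _ => False
  symm := by
    constructor
    rintro (a | w) (b | x) h
    · exact h.symm
    · exact h
    · exact h
    · exact h.elim
  loopless := by
    constructor
    rintro (a | w) h
    · exact G.loopless.irrefl a h
    · exact h.elim

/-- The closed neighborhood, inside the vertex set `Ws`, of the edge `uv`. -/
def closedEdgeNbhdOn (G : SimpleGraph V) (Ws : Set V) (u v : V) : Set V :=
  {w ∈ Ws | w = u ∨ w = v ∨ G.Adj u w ∨ G.Adj v w}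

/-- The vertex sets `B_i` remaining after successively removing the closed
neighborhoods of the edges `e 0, e 1, …`. -/
def remSet (G : SimpleGraph V) (e : ℕ → V × V) : ℕ → Set V
  | 0 => Set.univ
  | i + 1 => remSet G e i \ closedEdgeNbhdOn G (remSet G e i) (e i).1 (e i).2

/-- A simple vertex of the subgraph induced on `Ws`. -/
def SimpleVertexOn (G : SimpleGraph V) (Ws : Set V) (x : V) : Prop :=
  x ∈ Ws ∧ ∀ u ∈ Ws, ∀ v ∈ Ws, G.Adj x u → G.Adj x v →
    ({a ∈ Ws | G.Adj u a} ⊆ {a ∈ Ws | G.Adj v a} ∨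
     {a ∈ Ws | G.Adj v a} ⊆ {a ∈ Ws | G.Adj u a})

/-- A bisimplicial edge of the subgraph induced on `Ws`. -/
def BisimplicialOn (G : SimpleGraph V) (Ws : Set V) (u v : V) : Prop :=
  u ∈ Ws ∧ v ∈ Ws ∧ G.Adj u v ∧
    ∀ a ∈ Ws, ∀ b ∈ Ws, G.Adj u a → a ≠ v → G.Adj v b → b ≠ u → G.Adj a b

/-- `e 0, …, e (k-1)` is a biclique elimination sequence for `G`. -/
def IsBES (G : SimpleGraph V) (k : ℕ) (e : ℕ → V × V) : Prop :=
  (∀ i < k, BisimplicialOn G (remSet G e i) (e i).1 (e i).2) ∧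
  ∀ u ∈ remSet G e k, ∀ v ∈ remSet G e k, ¬ G.Adj u v

/-- A simple biclique elimination sequence. -/
def IsSimpleBES (G : SimpleGraph V) (k : ℕ) (e : ℕ → V × V) : Prop :=
  IsBES G k e ∧
  ∀ i < k, SimpleVertexOn G (remSet G e i) (e i).1 ∨
           SimpleVertexOn G (remSet G e i) (e i).2

/-- A complete simple biclique elimination sequence: no deletion step ever
leaves an isolated vertex behind. -/
def IsCompleteSBES (G : SimpleGraph V) (k : ℕ) (e : ℕ → V × V) : Prop :=
  IsSimpleBES G k e ∧
  ∀ i < k, ∀ w ∈ remSet G e (i + 1), ∃ w' ∈ remSet G e (i + 1), G.Adj w w'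

/-- `v` is covered by (incident to) an edge of `M`. -/
def coveredBy (M : Finset (Sym2 V)) (v : V) : Prop := ∃ e ∈ M, v ∈ e

/-- The class `Γ`: connected bipartite graphs of minimum degree at least two,
with an induced matching `M` with `|M| > |V|/3` such that every uncovered
vertex is adjacent to endpoints of at least two distinct edges of `M`. -/
def InGamma (G : SimpleGraph V) (M : Finset (Sym2 V)) : Prop :=
  G.Colorable 2 ∧ G.Connected ∧
  (∀ v : V, ∃ w w' : V, w ≠ w' ∧ G.Adj v w ∧ G.Adj v w') ∧
  IsInducedMatching G M ∧
  3 * M.card > Nat.card V ∧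
  (∀ v : V, ¬ coveredBy M v →
    ∃ e ∈ M, ∃ f ∈ M, e ≠ f ∧ (∃ x ∈ e, G.Adj v x) ∧ (∃ y ∈ f, G.Adj v y))

/-!
Map `v` to `u` and fix every other vertex. This retraction of `G` onto `G - v` reflects
adjacency, because `v` is adjacent to every neighbour of `u` other than itself. Pulling an
optimal biclique partition of `G - v` back along it therefore gives a biclique partition of
`G` with the same number of parts: `v` joins `u` on the same side of the same biclique.
-/

section BicliquePartition

variable {V' : Type} {G : SimpleGraph V} {H : SimpleGraph V'}

theorem IsBicliquePartition.bp_le {k : ℕ} {X Y : Fin k → Finset V}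
    (hP : IsBicliquePartition G k X Y) : bp G ≤ k :=
  Nat.sInf_le ⟨X, Y, hP⟩

theorem exists_isBicliquePartition [Fintype V] (G : SimpleGraph V) :
    ∃ k, ∃ X Y : Fin k → Finset V, IsBicliquePartition G k X Y := by
  classical
  let e := Fintype.equivFin V
  refine ⟨Fintype.card V, fun i => {e.symm i}, fun _ => ∅, fun i => Finset.singleton_nonempty _,
    fun _ => Finset.disjoint_empty_right _, fun _ _ _ _ hy => absurd hy (Finset.notMem_empty _),
    fun w => ⟨e w, by simp, ?_⟩⟩
  rintro i (hi | hi)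
  · simp [Finset.mem_singleton.mp hi]
  · exact absurd hi (Finset.notMem_empty _)

theorem exists_isBicliquePartition_bp [Finite V] (G : SimpleGraph V) :
    ∃ X Y : Fin (bp G) → Finset V, IsBicliquePartition G (bp G) X Y :=
  have := Fintype.ofFinite V
  Nat.sInf_mem (exists_isBicliquePartition G)

theorem IsBicliquePartition.comap [Fintype V] [DecidableEq V'] {k : ℕ} {X Y : Fin k → Finset V'}
    (hP : IsBicliquePartition H k X Y) (f : V → V') (hf : Function.Surjective f)
    (hadj : ∀ x y, H.Adj (f x) (f y) → G.Adj x y) :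
    IsBicliquePartition G k (fun i => {x | f x ∈ X i}) (fun i => {x | f x ∈ Y i}) := by
  obtain ⟨hne, hdisj, hbic, huniq⟩ := hP
  refine ⟨fun i => ?_, fun i => ?_, fun i x hx y hy => ?_, fun w => ?_⟩
  · obtain ⟨x', hx'⟩ := hne i
    obtain ⟨x, rfl⟩ := hf x'
    exact ⟨x, by simpa using hx'⟩
  · simp only [Finset.disjoint_left, Finset.mem_filter, Finset.mem_univ, true_and]
    exact fun _ hx => Finset.disjoint_left.mp (hdisj i) hx
  · simp only [Finset.mem_filter, Finset.mem_univ, true_and] at hx hy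
    exact hadj x y (hbic i _ hx _ hy)
  · simpa only [Finset.mem_filter, Finset.mem_univ, true_and] using huniq (f w)

theorem bp_le_bp_of_surjective [Finite V] (f : V → V') (hf : Function.Surjective f)
    (hadj : ∀ x y, H.Adj (f x) (f y) → G.Adj x y) : bp G ≤ bp H := by
  classical
  have := Fintype.ofFinite V
  have := Finite.of_surjective f hf
  obtain ⟨X, Y, hP⟩ := exists_isBicliquePartition_bp H
  exact (hP.comap f hf hadj).bp_le

end BicliquePartition

/-- If `N(u) \ {v} ⊆ N(v)` then `bp(G) ≤ bp(G - v)`. -/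
theorem bp_le_bp_deleteVertex {V : Type} [Fintype V] (G : SimpleGraph V)
    (u v : V) (hne : u ≠ v)
    (h : G.neighborSet u \ {v} ⊆ G.neighborSet v) :
    bp G ≤ bp (G.induce {w | w ≠ v}) := by
  classical
  let f : V → {w | w ≠ v} := fun w => if hw : w = v then ⟨u, hne⟩ else ⟨w, hw⟩
  have hf : ∀ w (hw : w ≠ v), f w = ⟨w, hw⟩ := fun w hw => dif_neg hw
  have hfv : f v = ⟨u, hne⟩ := dif_pos rfl
  refine bp_le_bp_of_surjective f (fun w => ⟨w, hf w w.2⟩) fun x y hxy => ?_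
  by_cases hx : x = v <;> by_cases hy : y = v
  · subst hx hy
    exact (hxy.ne rfl).elim
  · subst hx
    rw [hfv, hf y hy] at hxy
    exact h ⟨hxy, hy⟩
  · subst hy
    rw [hfv, hf x hx] at hxy
    exact (h ⟨hxy.symm, hx⟩).symm
  · rwa [hf x hx, hf y hy] at hxy

end Paper
end

section
/- If a bipartite graph B admits a complete simple biclique elimination sequence, then every simple biclique elimination sequence of B is complete and has the same length. -/
open SimpleGraph CategoryTheory

namespace Paper

variable {V : Type} {W : Type}

/-!
In a triangle-free graph, let `xy` be a bisimplicial edge whose closed neighbourhood `N[xy]` can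
be deleted without creating isolated vertices, and let `uv` be any bisimplicial edge. If `uv`
meets `N[xy]`, then `N[uv] = N[xy]`: say `x ~ u`; then `v ~ y`, for otherwise `v`, not adjacent
to `x` for lack of triangles, would lie outside `N[xy]` with all its neighbours in `N(x)`, and
become isolated; now the two bicliques force `N(u) = N(y)` and `N(v) = N(x)`. If `uv` misses
`N[xy]`, the two deletions commute. So any bisimplicial edge can start a complete elimination
sequence of the original length, and induction on the length of an arbitrary sequence
finishes the proof.
-/

section Elimination

def NoIsolatedOn (G : SimpleGraph V) (A : Set V) : Prop := ∀ w ∈ A, ∃ w' ∈ A, G.Adj w w'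

/-- `B − N_B[p]`, for `B` the subgraph induced on `Ws`. -/
def deleteNbhd (G : SimpleGraph V) (Ws : Set V) (p : V × V) : Set V :=
  Ws \ closedEdgeNbhdOn G Ws p.1 p.2

/-- The recursive counterpart of `IsBES`, started from the vertex set `Ws`, with an arbitrary
condition `step` on each eliminated edge. -/
def IsElimSeqOn (G : SimpleGraph V) (step : Set V → V × V → Prop) :
    Set V → ℕ → (ℕ → V × V) → Prop
  | Ws, 0, _ => ∀ u ∈ Ws, ∀ v ∈ Ws, ¬ G.Adj u v
  | Ws, k + 1, e =>
      step Ws (e 0) ∧ IsElimSeqOn G step (deleteNbhd G Ws (e 0)) k fun n => e (n + 1)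

def IsCompleteStep (G : SimpleGraph V) (Ws : Set V) (p : V × V) : Prop :=
  BisimplicialOn G Ws p.1 p.2 ∧ NoIsolatedOn G (deleteNbhd G Ws p)

variable {G : SimpleGraph V} {Ws : Set V} {u v x y : V}

lemma BisimplicialOn.symm (h : BisimplicialOn G Ws u v) : BisimplicialOn G Ws v u :=
  ⟨h.2.1, h.1, h.2.2.1.symm,
    fun a ha b hb hva hau hub hbv => (h.2.2.2 b hb a ha hub hbv hva hau).symm⟩

lemma BisimplicialOn.mono {Ws' : Set V} (h : BisimplicialOn G Ws u v) (hsub : Ws' ⊆ Ws)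
    (hu : u ∈ Ws') (hv : v ∈ Ws') : BisimplicialOn G Ws' u v :=
  ⟨hu, hv, h.2.2.1, fun a ha b hb => h.2.2.2 a (hsub ha) b (hsub hb)⟩

lemma BisimplicialOn.adj_of_adj {a b : V} (h : BisimplicialOn G Ws u v) (ha : a ∈ Ws)
    (hb : b ∈ Ws) (hua : G.Adj u a) (hvb : G.Adj v b) : G.Adj a b := by
  by_cases hav : a = v
  · exact hav ▸ hvb
  by_cases hbu : b = u
  · exact hbu ▸ hua.symm
  exact h.2.2.2 a ha b hb hua hav hvb hbu

lemma closedEdgeNbhdOn_comm : closedEdgeNbhdOn G Ws u v = closedEdgeNbhdOn G Ws v u := by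
  ext w
  simp only [closedEdgeNbhdOn, Set.mem_ofPred_eq]
  tauto

lemma closedEdgeNbhdOn_of_adj (h : G.Adj u v) :
    closedEdgeNbhdOn G Ws u v = {w ∈ Ws | G.Adj u w ∨ G.Adj v w} := by
  ext w
  simp only [closedEdgeNbhdOn, Set.mem_ofPred_eq]
  constructor
  · rintro ⟨hw, rfl | rfl | h'⟩
    exacts [⟨hw, .inr h.symm⟩, ⟨hw, .inl h⟩, ⟨hw, h'⟩]
  · rintro ⟨hw, h'⟩
    exact ⟨hw, .inr (.inr h')⟩

lemma meets_closedEdgeNbhdOn_comm (hx : x ∈ Ws) (hy : y ∈ Ws) (hu : u ∈ Ws) (hv : v ∈ Ws) :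
    (x ∈ closedEdgeNbhdOn G Ws u v ∨ y ∈ closedEdgeNbhdOn G Ws u v) ↔
      (u ∈ closedEdgeNbhdOn G Ws x y ∨ v ∈ closedEdgeNbhdOn G Ws x y) := by
  simp only [closedEdgeNbhdOn, Set.mem_ofPred_eq, hx, hy, hu, hv, true_and, G.adj_comm u,
    G.adj_comm v, eq_comm (a := u), eq_comm (a := v)]
  tauto

lemma deleteNbhd_comm (p q : V × V) :
    deleteNbhd G (deleteNbhd G Ws p) q = deleteNbhd G (deleteNbhd G Ws q) p := by
  ext w
  simp only [deleteNbhd, closedEdgeNbhdOn, Set.mem_sdiff, Set.mem_ofPred_eq]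
  tauto

lemma NoIsolatedOn.of_deleteNbhd {A : Set V} {p : V × V} (hp : G.Adj p.1 p.2) (h₁ : p.1 ∈ A)
    (h₂ : p.2 ∈ A) (h : NoIsolatedOn G (deleteNbhd G A p)) : NoIsolatedOn G A := by
  intro z hz
  by_cases hzp : z ∈ closedEdgeNbhdOn G A p.1 p.2
  · rw [closedEdgeNbhdOn_of_adj hp] at hzp
    rcases hzp.2 with h₁z | h₂z
    exacts [⟨p.1, h₁, h₁z.symm⟩, ⟨p.2, h₂, h₂z.symm⟩]
  · obtain ⟨w, hw, hzw⟩ := h z ⟨hz, hzp⟩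
    exact ⟨w, hw.1, hzw⟩

theorem closedEdgeNbhdOn_eq_of_adj (hG : G.CliqueFree 3) (hxy : BisimplicialOn G Ws x y)
    (huv : BisimplicialOn G Ws u v) (hiso : NoIsolatedOn G (deleteNbhd G Ws (x, y)))
    (hxu : G.Adj x u) : closedEdgeNbhdOn G Ws x y = closedEdgeNbhdOn G Ws u v := by
  have no_triangle : ∀ a b c, G.Adj a b → G.Adj a c → G.Adj b c → False :=
    fun a b c hab hac hbc => isIndepSet_neighborSet_of_triangleFree G hG a hab hac hbc.ne hbc
  have hyv : G.Adj y v := by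
    by_contra hyv
    have hv : v ∈ deleteNbhd G Ws (x, y) := by
      refine ⟨huv.2.1, ?_⟩
      rintro ⟨-, rfl | rfl | hxv | hyv'⟩
      · exact hyv hxy.2.2.1.symm
      · exact no_triangle _ _ _ hxu hxy.2.2.1 huv.2.2.1
      · exact no_triangle _ _ _ hxu hxv huv.2.2.1
      · exact hyv hyv'
    obtain ⟨w, hw, hvw⟩ := hiso v hv
    exact hw.2 ⟨hw.1, .inr (.inr (.inl (huv.adj_of_adj hxy.1 hw.1 hxu.symm hvw)))⟩
  have hYU : ∀ w ∈ Ws, G.Adj y w ↔ G.Adj u w := fun w hw =>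
    ⟨hxy.adj_of_adj huv.1 hw hxu, fun huw => (huv.adj_of_adj hw hxy.2.1 huw hyv.symm).symm⟩
  have hXV : ∀ w ∈ Ws, G.Adj x w ↔ G.Adj v w := fun w hw =>
    ⟨fun hxw => (hxy.adj_of_adj hw huv.2.1 hxw hyv).symm, huv.adj_of_adj hxy.1 hw hxu.symm⟩
  rw [closedEdgeNbhdOn_of_adj hxy.2.2.1, closedEdgeNbhdOn_of_adj huv.2.2.1]
  ext w
  simp only [Set.mem_ofPred_eq]
  exact and_congr_right fun hw => by rw [hXV w hw, hYU w hw, or_comm]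

theorem closedEdgeNbhdOn_eq_of_mem (hG : G.CliqueFree 3) (hxy : BisimplicialOn G Ws x y)
    (huv : BisimplicialOn G Ws u v) (hiso : NoIsolatedOn G (deleteNbhd G Ws (x, y)))
    (hmeet : u ∈ closedEdgeNbhdOn G Ws x y ∨ v ∈ closedEdgeNbhdOn G Ws x y) :
    closedEdgeNbhdOn G Ws x y = closedEdgeNbhdOn G Ws u v := by
  have hiso' : NoIsolatedOn G (deleteNbhd G Ws (y, x)) := by
    rwa [deleteNbhd, closedEdgeNbhdOn_comm]
  rw [closedEdgeNbhdOn_of_adj hxy.2.2.1] at hmeet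
  rcases hmeet with ⟨-, hxu | hyu⟩ | ⟨-, hxv | hyv⟩
  · exact closedEdgeNbhdOn_eq_of_adj hG hxy huv hiso hxu
  · rw [closedEdgeNbhdOn_comm]
    exact closedEdgeNbhdOn_eq_of_adj hG hxy.symm huv hiso' hyu
  · rw [closedEdgeNbhdOn_comm (u := u)]
    exact closedEdgeNbhdOn_eq_of_adj hG hxy huv.symm hiso hxv
  · rw [closedEdgeNbhdOn_comm, closedEdgeNbhdOn_comm (u := u)]
    exact closedEdgeNbhdOn_eq_of_adj hG hxy.symm huv.symm hiso' hyv

theorem isElimSeqOn_iff {step : Set V → V × V → Prop} :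
    ∀ {k : ℕ} {R : ℕ → Set V} {e : ℕ → V × V}, (∀ i, R (i + 1) = deleteNbhd G (R i) (e i)) →
      (IsElimSeqOn G step (R 0) k e ↔
        (∀ i < k, step (R i) (e i)) ∧ ∀ u ∈ R k, ∀ v ∈ R k, ¬ G.Adj u v)
  | 0, R, e, _ => by simp [IsElimSeqOn]
  | k + 1, R, e, hR => by
    rw [IsElimSeqOn, ← hR, isElimSeqOn_iff (R := fun i => R (i + 1)) fun i => hR (i + 1),
      Nat.forall_lt_succ_left, and_assoc]

lemma isElimSeqOn_univ_iff {step : Set V → V × V → Prop} {k : ℕ} {e : ℕ → V × V} :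
    IsElimSeqOn G step Set.univ k e ↔ (∀ i < k, step (remSet G e i) (e i)) ∧
      ∀ u ∈ remSet G e k, ∀ v ∈ remSet G e k, ¬ G.Adj u v :=
  isElimSeqOn_iff (R := remSet G e) fun _ => rfl

lemma isBES_iff {k : ℕ} {e : ℕ → V × V} :
    IsBES G k e ↔ IsElimSeqOn G (fun Ws p => BisimplicialOn G Ws p.1 p.2) Set.univ k e := by
  rw [isElimSeqOn_univ_iff]
  rfl

lemma isCompleteSBES_iff {k : ℕ} {e : ℕ → V × V} :
    IsCompleteSBES G k e ↔ IsSimpleBES G k e ∧ IsElimSeqOn G (IsCompleteStep G) Set.univ k e := by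
  rw [isElimSeqOn_univ_iff]
  constructor
  · rintro ⟨hs, hc⟩
    exact ⟨hs, fun i hi => ⟨hs.1.1 i hi, hc i hi⟩, hs.1.2⟩
  · rintro ⟨hs, hc, -⟩
    exact ⟨hs, fun i hi => (hc i hi).2⟩

theorem exists_completeSeq_of_bisimplicialOn (hG : G.CliqueFree 3) :
    ∀ {k : ℕ} {Ws : Set V} {e : ℕ → V × V} {p : V × V},
      IsElimSeqOn G (IsCompleteStep G) Ws k e → BisimplicialOn G Ws p.1 p.2 →
      ∃ m, k = m + 1 ∧ NoIsolatedOn G (deleteNbhd G Ws p) ∧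
        ∃ e', IsElimSeqOn G (IsCompleteStep G) (deleteNbhd G Ws p) m e'
  | 0, _, _, _, he, hp => absurd hp.2.2.1 (he _ hp.1 _ hp.2.1)
  | m + 1, Ws, e, p, ⟨⟨hq, hqiso⟩, htail⟩, hp => by
    by_cases hmeet : p.1 ∈ closedEdgeNbhdOn G Ws (e 0).1 (e 0).2 ∨
        p.2 ∈ closedEdgeNbhdOn G Ws (e 0).1 (e 0).2
    · have hN := closedEdgeNbhdOn_eq_of_mem hG hq hp hqiso hmeet
      refine ⟨m, rfl, ?_, fun n => e (n + 1), ?_⟩ <;> rw [deleteNbhd, ← hN]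
      exacts [hqiso, htail]
    · obtain ⟨hp₁, hp₂⟩ := not_or.1 hmeet
      obtain ⟨hq₁, hq₂⟩ :=
        not_or.1 <| (meets_closedEdgeNbhdOn_comm hq.1 hq.2.1 hp.1 hp.2.1).not.2 hmeet
      obtain ⟨m', rfl, hiso, e', he'⟩ := exists_completeSeq_of_bisimplicialOn hG htail
        (hp.mono Set.sdiff_subset ⟨hp.1, hp₁⟩ ⟨hp.2.1, hp₂⟩)
      rw [deleteNbhd_comm] at hiso he'
      exact ⟨m' + 1, rfl, hiso.of_deleteNbhd hq.2.2.1 ⟨hq.1, hq₁⟩ ⟨hq.2.1, hq₂⟩,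
        fun n => Nat.casesOn (motive := fun _ => V × V) n (e 0) e',
        ⟨hq.mono Set.sdiff_subset ⟨hq.1, hq₁⟩ ⟨hq.2.1, hq₂⟩, hiso⟩, he'⟩

theorem IsElimSeqOn.isComplete_and_length_eq (hG : G.CliqueFree 3) :
    ∀ {l k : ℕ} {Ws : Set V} {e f : ℕ → V × V},
      IsElimSeqOn G (IsCompleteStep G) Ws k e →
      IsElimSeqOn G (fun Ws p => BisimplicialOn G Ws p.1 p.2) Ws l f →
      IsElimSeqOn G (IsCompleteStep G) Ws l f ∧ l = k
  | 0, 0, _, _, _, _, hf => ⟨hf, rfl⟩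
  | 0, _ + 1, _, _, _, ⟨⟨hq, _⟩, _⟩, hf => absurd hq.2.2.1 (hf _ hq.1 _ hq.2.1)
  | _ + 1, _, _, _, _, he, ⟨hp, hf⟩ => by
    obtain ⟨m, rfl, hiso, e', he'⟩ := exists_completeSeq_of_bisimplicialOn hG he hp
    obtain ⟨hc, rfl⟩ := isComplete_and_length_eq hG he' hf
    exact ⟨⟨⟨hp, hiso⟩, hc⟩, rfl⟩

end Elimination

theorem simpleBES_complete_and_length_eq_general {V : Type}
    (B : SimpleGraph V) (hbip : B.Colorable 2) (k : ℕ) (e : ℕ → V × V)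
    (h : IsCompleteSBES B k e) (l : ℕ) (f : ℕ → V × V)
    (hf : IsSimpleBES B l f) :
    IsCompleteSBES B l f ∧ l = k := by
  obtain ⟨hcomp, hlk⟩ := (isCompleteSBES_iff.1 h).2.isComplete_and_length_eq
    (hbip.cliqueFree (by norm_num)) (isBES_iff.1 hf.1)
  exact ⟨isCompleteSBES_iff.2 ⟨hf, hcomp⟩, hlk⟩

/-- if `B` admits a complete simple biclique elimination
sequence, then every simple biclique elimination sequence of `B` is complete
and has the same length. -/
theorem simpleBES_complete_and_length_eq {V : Type} [Fintype V]
    (B : SimpleGraph V) (hbip : B.Colorable 2) (k : ℕ) (e : ℕ → V × V)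
    (h : IsCompleteSBES B k e) (l : ℕ) (f : ℕ → V × V)
    (hf : IsSimpleBES B l f) :
    IsCompleteSBES B l f ∧ l = k :=
  simpleBES_complete_and_length_eq_general B hbip k e h l f hf

end Paper
end

section
/- If u and v are vertices of a graph G with N(u) ⊆ N(v), then the independence complexes Ind(G) and Ind(G − v) are homotopy equivalent. -/
open SimpleGraph CategoryTheory

/-!
Sliding the weight of `v` onto `u` maps `Ind G` into the points with no weight at `v`, that is,
onto `Ind (G - v)`. It keeps supports independent: when `v` carries weight, `u` can join the
face because every neighbour of `u` is a neighbour of `v`. Extension by zero is a section of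
this map, and the other composite is joined to the identity by the straight-line homotopy,
which stays inside the simplex on `supp x ∪ {u}`, a face of `Ind G`.
-/

open Function

theorem finsum_subtype_eq_finsum_of_support_subset {α M : Type*} [AddCommMonoid M] {s : Set α}
    {f : α → M} (h : support f ⊆ s) : ∑ᶠ a : s, f a = ∑ᶠ a, f a := by
  rw [finsum_set_coe_eq_finsum_mem, finsum_mem_def, Set.indicator_eq_self.2 h]

theorem Function.extend_subtype_val_comp_of_support_subset {α M : Type*} [Zero M] {s : Set α}
    {f : α → M} (h : support f ⊆ s) : extend Subtype.val (f ∘ Subtype.val : s → M) 0 = f := by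
  funext a
  by_cases ha : a ∈ s
  · exact Subtype.val_injective.extend_apply _ _ ⟨a, ha⟩
  · rw [extend_apply' _ _ _ (by simpa using ha), Pi.zero_apply, eq_comm, ← notMem_support]
    exact fun h' => ha (h h')

theorem continuous_extend_subtype_val {α M : Type*} [TopologicalSpace M] [Zero M] (s : Set α) :
    Continuous fun g : s → M => extend Subtype.val g 0 := by
  refine continuous_pi fun a => ?_
  by_cases ha : ∃ b : s, b.1 = a
  · obtain ⟨b, rfl⟩ := ha
    simp only [Subtype.val_injective.extend_apply]
    exact continuous_apply b
  · simp only [extend_apply' _ _ _ ha]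
    exact continuous_const

namespace SimpleGraph

variable {V : Type*} {G : SimpleGraph V}

theorem isIndepSet_induce_iff {s : Set V} {t : Set s} :
    (G.induce s).IsIndepSet t ↔ G.IsIndepSet (Subtype.val '' t) :=
  (Subtype.val_injective.injOn.pairwise_image (r := fun a b => ¬G.Adj a b)).symm

theorem IsIndepSet.insert_of_neighborSet_subset {s : Set V} {u v : V} (hs : G.IsIndepSet s)
    (hv : v ∈ s) (h : G.neighborSet u ⊆ G.neighborSet v) : G.IsIndepSet (insert u s) := by
  have hu : ∀ w ∈ s, ¬G.Adj u w := fun w hw huw => hs hv hw (G.ne_of_adj (h huw)) (h huw)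
  exact Set.pairwise_insert.2 ⟨hs, fun w hw _ => ⟨hu w hw, fun hwu => hu w hw hwu.symm⟩⟩

end SimpleGraph

theorem ContinuousMap.homotopic_of_segment_subset {X E : Type*} [TopologicalSpace X]
    [AddCommGroup E] [Module ℝ E] [TopologicalSpace E] [ContinuousAdd E] [ContinuousSMul ℝ E]
    {s : Set E} (f g : C(X, s)) (h : ∀ x, segment ℝ (f x : E) (g x) ⊆ s) : f.Homotopic g :=
  ⟨{ toFun := fun p => ⟨(1 - p.1 : ℝ) • (f p.2 : E) + (p.1 : ℝ) • (g p.2 : E),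
        h p.2 ⟨_, _, sub_nonneg.2 p.1.2.2, p.1.2.1, sub_add_cancel _ _, rfl⟩⟩
     continuous_toFun := by fun_prop
     map_zero_left := by simp
     map_one_left := by simp }⟩

namespace Paper

variable {V : Type} {G : SimpleGraph V}

/-- `indRealization G` is by definition the subtype of this set. -/
def indSet (G : SimpleGraph V) : Set (V → ℝ) :=
  {f | (∀ v, 0 ≤ f v) ∧ (∑ᶠ v, f v) = 1 ∧ ∀ u v, f u ≠ 0 → f v ≠ 0 → ¬ G.Adj u v}

theorem mem_indSet_iff {f : V → ℝ} :
    f ∈ indSet G ↔ (∀ v, 0 ≤ f v) ∧ (∑ᶠ v, f v) = 1 ∧ G.IsIndepSet (support f) := by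
  refine and_congr_right' (and_congr_right' ⟨fun h a ha b hb _ => h a b ha hb, ?_⟩)
  exact fun h a b ha hb hab => h ha hb hab.ne hab

theorem hasFiniteSupport_of_mem_indSet {f : V → ℝ} (hf : f ∈ indSet G) : HasFiniteSupport f :=
  hasFiniteSupport_of_finsum_ne_zero (by rw [hf.2.1]; exact one_ne_zero)

theorem segment_subset_indSet {f g : V → ℝ} (hf : f ∈ indSet G) (hg : g ∈ indSet G)
    (hfg : G.IsIndepSet (support f ∪ support g)) : segment ℝ f g ⊆ indSet G := by
  rintro _ ⟨a, b, ha, hb, hab, rfl⟩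
  have hfa : HasFiniteSupport (a • f) :=
    (hasFiniteSupport_of_mem_indSet hf).subset (support_const_smul_subset a f)
  have hgb : HasFiniteSupport (b • g) :=
    (hasFiniteSupport_of_mem_indSet hg).subset (support_const_smul_subset b g)
  rw [mem_indSet_iff] at hf hg ⊢
  refine ⟨fun w => ?_, ?_, hfg.mono ?_⟩
  · simp only [Pi.add_apply, Pi.smul_apply, smul_eq_mul]
    exact add_nonneg (mul_nonneg ha (hf.1 w)) (mul_nonneg hb (hg.1 w))
  · simp only [Pi.add_apply]
    rw [finsum_add_distrib hfa hgb]
    simp only [Pi.smul_apply, smul_eq_mul]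
    rw [← mul_finsum, ← mul_finsum, hf.2.1, hg.2.1, mul_one, mul_one, hab]
  · exact (support_add _ _).trans (Set.union_subset_union
      (support_const_smul_subset a f) (support_const_smul_subset b g))

theorem comp_val_mem_indSet {s : Set V} {f : V → ℝ} (hf : f ∈ indSet G) (hs : support f ⊆ s) :
    f ∘ Subtype.val ∈ indSet (G.induce s) := by
  rw [mem_indSet_iff] at hf ⊢
  refine ⟨fun w => hf.1 w, ?_, ?_⟩
  · rw [← hf.2.1]
    exact finsum_subtype_eq_finsum_of_support_subset hs
  · rw [SimpleGraph.isIndepSet_induce_iff, support_comp_eq_preimage]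
    exact hf.2.2.mono (Set.image_preimage_subset _ _)

theorem extend_mem_indSet {s : Set V} {g : s → ℝ} (hg : g ∈ indSet (G.induce s)) :
    extend Subtype.val g 0 ∈ indSet G := by
  rw [mem_indSet_iff] at hg ⊢
  have hsupp := support_extend_zero (g := g) Subtype.val_injective
  refine ⟨fun w => ?_, ?_, ?_⟩
  · by_cases hw : ∃ a : s, a.1 = w
    · obtain ⟨a, rfl⟩ := hw
      rw [Subtype.val_injective.extend_apply]
      exact hg.1 a
    · rw [extend_apply' _ _ _ hw]
      rfl
  · rw [← finsum_subtype_eq_finsum_of_support_subset (s := s) (hsupp.trans_subset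
      (Subtype.coe_image_subset s _)), ← hg.2.1]
    exact finsum_congr fun a => Subtype.val_injective.extend_apply _ _ a
  · rw [hsupp]
    exact SimpleGraph.isIndepSet_induce_iff.1 hg.2.2

noncomputable def extendByZero (s : Set V) : C(indRealization (G.induce s), indRealization G) where
  toFun g := ⟨extend Subtype.val g.1 0, extend_mem_indSet g.2⟩
  continuous_toFun :=
    ((continuous_extend_subtype_val s).comp continuous_subtype_val).subtype_mk _

section moveWeight

variable [DecidableEq V] (u v : V) (f : V → ℝ)

def moveWeight : V → ℝ := f + Pi.single u (f v) - Pi.single v (f v)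

theorem moveWeight_apply (w : V) :
    moveWeight u v f w = f w + (Pi.single u (f v) : V → ℝ) w - (Pi.single v (f v) : V → ℝ) w :=
  rfl

theorem moveWeight_apply_right (hne : u ≠ v) : moveWeight u v f v = 0 := by
  simp [moveWeight, hne.symm]

theorem moveWeight_of_apply_eq_zero (hf : f v = 0) : moveWeight u v f = f := by
  simp [moveWeight, hf]

theorem moveWeight_nonneg (hf : ∀ w, 0 ≤ f w) (w : V) : 0 ≤ moveWeight u v f w := by
  rw [moveWeight_apply]
  have hu := hf u
  have hv := hf v
  have hw := hf w
  simp only [Pi.single_apply]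
  split_ifs <;> subst_vars <;> linarith

theorem support_moveWeight_subset : support (moveWeight u v f) ⊆ insert u (support f) := by
  intro w hw
  by_contra hcon
  simp only [Set.mem_insert_iff, Function.mem_support, not_or, not_not] at hcon
  apply hw
  rw [moveWeight_apply]
  simp only [Pi.single_apply, hcon.1, if_false]
  split_ifs <;> subst_vars <;> simp [hcon.2]

theorem finsum_moveWeight (hf : HasFiniteSupport f) :
    ∑ᶠ w, moveWeight u v f w = ∑ᶠ w, f w := by
  have hsingle : ∀ (i : V) (c : ℝ), HasFiniteSupport (Pi.single i c : V → ℝ) := fun i c =>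
    (Set.finite_singleton i).subset Pi.support_single_subset
  have hsum : ∀ (i : V) (c : ℝ), ∑ᶠ j, (Pi.single i c : V → ℝ) j = c := fun i c => by
    rw [finsum_eq_single _ i fun j hj => by simp [hj], Pi.single_eq_same]
  simp only [moveWeight_apply]
  rw [finsum_sub_distrib (f := fun w => f w + (Pi.single u (f v) : V → ℝ) w)
    (hf.add (hsingle u _)) (hsingle v _), finsum_add_distrib hf (hsingle u _), hsum, hsum,
    add_sub_cancel_right]

theorem continuous_moveWeight : Continuous (moveWeight u v) :=
  (continuous_id.add ((continuous_single u).comp (continuous_apply v))).sub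
    ((continuous_single v).comp (continuous_apply v))

variable {f}

theorem isIndepSet_support_union_moveWeight (h : G.neighborSet u ⊆ G.neighborSet v)
    (hf : G.IsIndepSet (support f)) : G.IsIndepSet (support f ∪ support (moveWeight u v f)) := by
  by_cases hv : f v = 0
  · rwa [moveWeight_of_apply_eq_zero u v f hv, Set.union_self]
  · exact (hf.insert_of_neighborSet_subset hv h).mono
      (Set.union_subset (Set.subset_insert u _) (support_moveWeight_subset u v f))

theorem moveWeight_mem_indSet (h : G.neighborSet u ⊆ G.neighborSet v) (hf : f ∈ indSet G) :
    moveWeight u v f ∈ indSet G := by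
  have hfin := hasFiniteSupport_of_mem_indSet hf
  rw [mem_indSet_iff] at hf ⊢
  exact ⟨moveWeight_nonneg u v f hf.1, (finsum_moveWeight u v f hfin).trans hf.2.1,
    (isIndepSet_support_union_moveWeight u v h hf.2.2).mono Set.subset_union_right⟩

end moveWeight

section retraction

variable [DecidableEq V] {u v : V}

theorem support_moveWeight_subset_ne (hne : u ≠ v) (f : V → ℝ) :
    support (moveWeight u v f) ⊆ {w | w ≠ v} :=
  fun _ hw hwv => hw (hwv ▸ moveWeight_apply_right u v f hne)

noncomputable def retraction (hne : u ≠ v) (h : G.neighborSet u ⊆ G.neighborSet v) :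
    C(indRealization G, indRealization (G.induce {w | w ≠ v})) where
  toFun x := ⟨moveWeight u v x.1 ∘ Subtype.val,
    comp_val_mem_indSet (moveWeight_mem_indSet u v h x.2) (support_moveWeight_subset_ne hne _)⟩
  continuous_toFun := by
    refine Continuous.subtype_mk (continuous_pi fun w => ?_) _
    exact (continuous_apply w.1).comp ((continuous_moveWeight u v).comp continuous_subtype_val)

theorem retraction_comp_extendByZero (hne : u ≠ v) (h : G.neighborSet u ⊆ G.neighborSet v) :
    (retraction hne h).comp (extendByZero _) = ContinuousMap.id _ := by
  ext y : 1
  refine Subtype.ext ?_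
  show moveWeight u v (extend Subtype.val y.1 0) ∘ Subtype.val = y.1
  rw [moveWeight_of_apply_eq_zero u v _ (extend_apply' _ _ _ fun ⟨a, ha⟩ => a.2 ha),
    extend_comp Subtype.val_injective]

theorem extendByZero_retraction_apply (hne : u ≠ v) (h : G.neighborSet u ⊆ G.neighborSet v)
    (x : indRealization G) :
    (extendByZero _ (retraction hne h x)).1 = moveWeight u v x.1 :=
  extend_subtype_val_comp_of_support_subset (support_moveWeight_subset_ne hne _)

theorem extendByZero_comp_retraction_homotopic (hne : u ≠ v)
    (h : G.neighborSet u ⊆ G.neighborSet v) :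
    ((extendByZero _).comp (retraction hne h)).Homotopic (ContinuousMap.id (indRealization G)) :=
  ContinuousMap.homotopic_of_segment_subset (s := indSet G) _ _ fun x => by
    show segment ℝ (extendByZero _ (retraction hne h x)).1 x.1 ⊆ indSet G
    rw [extendByZero_retraction_apply]
    exact segment_subset_indSet (moveWeight_mem_indSet u v h x.2) x.2
      (Set.union_comm _ _ ▸ isIndepSet_support_union_moveWeight u v h
        ((mem_indSet_iff.1 x.2).2.2))

end retraction

theorem ind_homotopyEquiv_deleteVertex_of_neighborSet_subset_general {V : Type}
    (G : SimpleGraph V) (u v : V) (hne : u ≠ v)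
    (h : G.neighborSet u ⊆ G.neighborSet v) :
    Nonempty (ContinuousMap.HomotopyEquiv (indRealization G)
      (indRealization (G.induce {w | w ≠ v}))) := by
  classical
  exact ⟨{ toFun := retraction hne h
           invFun := extendByZero _
           left_inv := extendByZero_comp_retraction_homotopic hne h
           right_inv := retraction_comp_extendByZero hne h ▸ .refl _ }⟩

/-- if `N(u) ⊆ N(v)` then `Ind(G)` and `Ind(G - v)` are
homotopy equivalent. -/
theorem ind_homotopyEquiv_deleteVertex_of_neighborSet_subset {V : Type}
    [Fintype V] (G : SimpleGraph V) (u v : V) (hne : u ≠ v)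
    (h : G.neighborSet u ⊆ G.neighborSet v) :
    Nonempty (ContinuousMap.HomotopyEquiv (indRealization G)
      (indRealization (G.induce {w | w ≠ v}))) :=
  ind_homotopyEquiv_deleteVertex_of_neighborSet_subset_general G u v hne h

end Paper
end

section
/- Every graph from the class Γ contains the long claw S_{2,2,2} (the 1-subdivision of K_{1,3}) as an induced subgraph. -/
open SimpleGraph CategoryTheory

namespace Paper

variable {V : Type} {W : Type}

/-!
Let `C` be the `2|M|` vertices covered by `M` and `U` the rest, so `|U| = |V| - 2|M| < |M|`.
A covered vertex has a second neighbour besides its partner, and since `M` is induced that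
neighbour is uncovered; double counting the `C`–`U` edges then gives an uncovered `u` with three
covered neighbours. A bipartite graph has no triangles, so these lie on three different edges of
`M` and `u` is not adjacent to their partners; as `M` is induced, `u`, its three neighbours and
their partners induce `S_{2,2,2}`.
-/

open Finset

section

variable {G : SimpleGraph V} {M : Finset (Sym2 V)}

theorem not_adj_of_cliqueFree_three (hG : G.CliqueFree 3) {a b c : V}
    (hab : G.Adj a b) (hbc : G.Adj b c) : ¬ G.Adj a c := by
  classical
  exact fun hac => hG {a, b, c} (is3Clique_triple_iff.2 ⟨hab, hac, hbc⟩)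

theorem exists_mk_mem_of_coveredBy {v : V} (hv : coveredBy M v) : ∃ w, s(v, w) ∈ M := by
  obtain ⟨e, he, hve⟩ := hv
  obtain ⟨w, rfl⟩ := Sym2.mem_iff_exists.1 hve
  exact ⟨w, he⟩

theorem mem_biUnion_toFinset_iff_coveredBy [DecidableEq V] {v : V} :
    v ∈ M.biUnion Sym2.toFinset ↔ coveredBy M v := by
  simp [coveredBy, Sym2.mem_toFinset]

theorem IsInducedMatching.exists_adj_not_coveredBy (hM : IsInducedMatching G M) {v : V}
    (hv : coveredBy M v) (hdeg : ∃ w w', w ≠ w' ∧ G.Adj v w ∧ G.Adj v w') :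
    ∃ w, G.Adj v w ∧ ¬ coveredBy M w := by
  obtain ⟨v', hvv'⟩ := exists_mk_mem_of_coveredBy hv
  obtain ⟨w, hvw, hwv'⟩ : ∃ w, G.Adj v w ∧ w ≠ v' := by
    obtain ⟨w, w', hww', hvw, hvw'⟩ := hdeg
    by_cases hw : w = v'
    · exact ⟨w', hvw', fun h => hww' (hw.trans h.symm)⟩
    · exact ⟨w, hvw, hw⟩
  refine ⟨w, hvw, fun ⟨f, hf, hwf⟩ => ?_⟩
  by_cases hf' : s(v, v') = f
  · subst hf'
    rcases Sym2.mem_iff.1 hwf with rfl | rfl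
    exacts [G.irrefl hvw, hwv' rfl]
  · exact (hM.2 _ hvv' f hf hf' v (Sym2.mem_mk_left _ _) w hwf).2 hvw

theorem IsInducedMatching.card_biUnion_toFinset [DecidableEq V] (hM : IsInducedMatching G M) :
    #(M.biUnion Sym2.toFinset) = 2 * #M := by
  rw [card_biUnion, sum_congr rfl fun e he =>
    Sym2.card_toFinset_of_not_isDiag e (G.not_isDiag_of_mem_edgeSet (hM.1 he)), sum_const,
    smul_eq_mul, mul_comm]
  intro e he f hf hef
  simp only [Function.onFun, Finset.disjoint_left, Sym2.mem_toFinset]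
  exact fun v hve hvf => (hM.2 e he f hf hef v hve v hvf).1 rfl

theorem IsInducedMatching.exists_not_coveredBy_two_lt_card [Fintype V] [DecidableEq V]
    [DecidableRel G.Adj] (hM : IsInducedMatching G M)
    (hdeg : ∀ v : V, ∃ w w', w ≠ w' ∧ G.Adj v w ∧ G.Adj v w')
    (hM3 : Fintype.card V < 3 * #M) :
    ∃ u, ¬ coveredBy M u ∧ 2 < #{v ∈ M.biUnion Sym2.toFinset | G.Adj v u} := by
  set C := M.biUnion Sym2.toFinset
  by_contra! hU
  have hcount : #C * 1 ≤ #(univ \ C) * 2 := by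
    refine card_mul_le_card_mul G.Adj (fun v hv => ?_) fun u hu => ?_
    · obtain ⟨w, hvw, hw⟩ :=
        hM.exists_adj_not_coveredBy (mem_biUnion_toFinset_iff_coveredBy.1 hv) (hdeg v)
      refine card_pos.2 ⟨w, mem_filter.2 ⟨mem_sdiff.2 ⟨mem_univ w, ?_⟩, hvw⟩⟩
      exact mem_biUnion_toFinset_iff_coveredBy.not.2 hw
    · exact hU u (mem_biUnion_toFinset_iff_coveredBy.not.1 (mem_sdiff.1 hu).2)
  have hCM : #C = 2 * #M := hM.card_biUnion_toFinset
  have hCV := card_le_univ C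
  rw [card_sdiff_of_subset (subset_univ C), card_univ] at hcount
  omega

noncomputable def clawEdgeEquiv : Fin 3 ≃ (completeBipartiteGraph (Fin 1) (Fin 3)).edgeSet :=
  Equiv.ofBijective (fun j => ⟨s(Sum.inl 0, Sum.inr j), by simp⟩) <| by
    refine ⟨fun i j h => by simpa using h, ?_⟩
    rintro ⟨ε, hε⟩
    induction ε using Sym2.ind with
    | _ x y =>
      rcases x with x | x <;> rcases y with y | y <;> simp [completeBipartiteGraph] at hε
      exacts [⟨y, Subtype.ext (by simp [Fin.fin_one_eq_zero x])⟩,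
        ⟨x, Subtype.ext (by simp [Sym2.eq_swap, Fin.fin_one_eq_zero y])⟩]

@[simp]
theorem coe_clawEdgeEquiv (j : Fin 3) :
    (clawEdgeEquiv j : Sym2 (Fin 1 ⊕ Fin 3)) = s(Sum.inl 0, Sum.inr j) :=
  rfl

theorem nonempty_longClaw_embedding_of_legs (u : V) (m l : Fin 3 → V)
    (hum : ∀ j, G.Adj u (m j)) (hml : ∀ j, G.Adj (m j) (l j))
    (hul : ∀ j, u ≠ l j ∧ ¬ G.Adj u (l j))
    (hlegs : Pairwise fun i j =>
      ∀ x ∈ s(m i, l i), ∀ y ∈ s(m j, l j), x ≠ y ∧ ¬ G.Adj x y) :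
    Nonempty (subdiv (completeBipartiteGraph (Fin 1) (Fin 3)) ↪g G) := by
  let f : (Fin 1 ⊕ Fin 3) ⊕ (completeBipartiteGraph (Fin 1) (Fin 3)).edgeSet → V
    | .inl (.inl _) => u
    | .inl (.inr j) => l j
    | .inr ε => m (clawEdgeEquiv.symm ε)
  simp only [_root_.Pairwise, ne_eq, Sym2.mem_iff, forall_eq_or_imp, forall_eq] at hlegs
  refine ⟨⟨⟨f, ?_⟩, ?_⟩⟩
  · simp only [Function.Injective, Sum.forall, ← clawEdgeEquiv.forall_congr_right]
    simp [f]
    grind [SimpleGraph.Adj.ne]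
  · simp only [Sum.forall, ← clawEdgeEquiv.forall_congr_right]
    simp [f, subdiv]
    grind [SimpleGraph.irrefl, SimpleGraph.adj_comm]

theorem IsInducedMatching.nonempty_longClaw_embedding (hG : G.CliqueFree 3)
    (hM : IsInducedMatching G M) {u : V} (hu : ¬ coveredBy M u) (m : Fin 3 ↪ V)
    (hm : ∀ j, coveredBy M (m j)) (hum : ∀ j, G.Adj u (m j)) :
    Nonempty (subdiv (completeBipartiteGraph (Fin 1) (Fin 3)) ↪g G) := by
  choose l hl using fun j => exists_mk_mem_of_coveredBy (hm j)
  have hml : ∀ j, G.Adj (m j) (l j) := fun j => hM.1 (hl j)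
  have hedges : Pairwise fun i j => s(m i, l i) ≠ s(m j, l j) := by
    intro i j hij heq
    rcases Sym2.mem_iff.1 (heq ▸ Sym2.mem_mk_left (m j) (l j)) with h | h
    · exact hij (m.injective h).symm
    · exact not_adj_of_cliqueFree_three hG (hum i) (hml i) (h ▸ hum j)
  refine nonempty_longClaw_embedding_of_legs u m l hum hml (fun j => ⟨?_, ?_⟩) fun i j hij =>
    hM.2 _ (hl i) _ (hl j) (hedges hij)
  · rintro rfl
    exact hu ⟨_, hl j, Sym2.mem_mk_right _ _⟩
  · exact not_adj_of_cliqueFree_three hG (hum j) (hml j)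

end

/-- every graph of the class `Γ` contains the long claw
`S_{2,2,2}` (the 1-subdivision of `K_{1,3}`) as an induced subgraph. -/
theorem inGamma_contains_long_claw {V : Type} [Fintype V] (G : SimpleGraph V)
    (M : Finset (Sym2 V)) (h : InGamma G M) :
    Nonempty (subdiv (completeBipartiteGraph (Fin 1) (Fin 3)) ↪g G) := by
  classical
  obtain ⟨hcol, -, hdeg, hM, hM3, -⟩ := h
  rw [Nat.card_eq_fintype_card] at hM3
  obtain ⟨u, hu, hthree⟩ := hM.exists_not_coveredBy_two_lt_card hdeg hM3
  obtain ⟨m⟩ : Nonempty (Fin 3 ↪ {v ∈ M.biUnion Sym2.toFinset | G.Adj v u}) :=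
    Function.Embedding.nonempty_of_card_le (by rwa [Fintype.card_fin, Fintype.card_coe])
  have hm : ∀ j, (m j : V) ∈ M.biUnion Sym2.toFinset ∧ G.Adj (m j) u := fun j =>
    mem_filter.1 (m j).2
  exact hM.nonempty_longClaw_embedding (hcol.cliqueFree (by norm_num)) hu
    (m.trans (Function.Embedding.subtype _))
    (fun j => mem_biUnion_toFinset_iff_coveredBy.1 (hm j).1) fun j => (hm j).2.symm

end Paper
end
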